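/- For a real smooth function b on the circle, b·(Λb) − (𝓗b)·(Db) = 2b₊·Λ(conj b₊) + 2(conj b₊)·Λb₊, where b₊ = b̂₀/2 + Σ_{k≥1} b̂_k e^{ikθ}. -/

import Mathlib

/-! Split every Fourier series into its zero mode, its positive-frequency part `P` and its
negative-frequency part `N`, and let `P'`, `N'` be the same parts weighted by `|n|`. Then
`b = c₀ + P + N`, `Λb = P' + N'`, `𝓗b = P - N`, `Db = P' - N'`, and reality of `b` gives
`b₊ = c₀/2 + P`, `conj b₊ = c₀/2 + N`, `Λ b₊ = P'`, `Λ(conj b₊) = N'`. The identity is then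
`(c₀ + P + N)(P' + N') - (P - N)(P' - N') = (c₀ + 2P) N' + (c₀ + 2N) P'`. -/

/-- The Fourier mode `e^{inθ}` on the circle. -/
noncomputable def fm (n : ℤ) (θ : ℝ) : ℂ := Complex.exp ((n : ℂ) * (θ : ℂ) * Complex.I)

lemma norm_fm (n : ℤ) (θ : ℝ) : ‖fm n θ‖ = 1 := by
  rw [fm, show (n : ℂ) * θ * Complex.I = ((n * θ : ℝ) : ℂ) * Complex.I by push_cast; ring,
    Complex.norm_exp_ofReal_mul_I]

lemma fm_zero (θ : ℝ) : fm 0 θ = 1 := by simp [fm]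

lemma Summable.tsum_int_eq_add_one_add_zero_add_neg_add_one {G : Type*} [AddCommGroup G]
    [UniformSpace G] [IsUniformAddGroup G] [CompleteSpace G] [T2Space G] {f : ℤ → G}
    (hf : Summable f) :
    ∑' n : ℤ, f n = ∑' k : ℕ, f ((k : ℤ) + 1) + f 0 + ∑' k : ℕ, f (-((k : ℤ) + 1)) :=
  tsum_of_add_one_of_neg_add_one
    (hf.comp_injective fun _ _ h => by simpa using h)
    (hf.comp_injective fun _ _ h => by simpa using h)

section FourierSeries

variable {c : ℤ → ℂ} (θ : ℝ)
  (hc₀ : Summable fun n : ℤ => ‖c n‖) (hc₁ : Summable fun n : ℤ => (|n| : ℝ) * ‖c n‖)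
include hc₀ hc₁

lemma summable_mul_mul_fm {w : ℤ → ℂ} (hw : ∀ n, ‖w n‖ ≤ 1 + |(n : ℝ)|) :
    Summable fun n => w n * c n * fm n θ := by
  refine (hc₀.add hc₁).of_norm_bounded fun n => ?_
  rw [norm_mul, norm_mul, norm_fm, mul_one, ← one_add_mul]
  exact mul_le_mul_of_nonneg_right (hw n) (norm_nonneg _)

lemma tsum_mul_mul_fm_eq {w : ℤ → ℂ} (hw : ∀ n, ‖w n‖ ≤ 1 + |(n : ℝ)|) :
    ∑' n, w n * c n * fm n θ = w 0 * c 0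
      + ∑' k : ℕ, w ((k : ℤ) + 1) * c ((k : ℤ) + 1) * fm ((k : ℤ) + 1) θ
      + ∑' k : ℕ, w (-((k : ℤ) + 1)) * c (-((k : ℤ) + 1)) * fm (-((k : ℤ) + 1)) θ := by
  rw [(summable_mul_mul_fm θ hc₀ hc₁ hw).tsum_int_eq_add_one_add_zero_add_neg_add_one, fm_zero,
    mul_one, add_comm (∑' _, _)]

lemma tsum_fm_eq :
    ∑' n, c n * fm n θ = c 0 + ∑' k : ℕ, c ((k : ℤ) + 1) * fm ((k : ℤ) + 1) θ
      + ∑' k : ℕ, c (-((k : ℤ) + 1)) * fm (-((k : ℤ) + 1)) θ := by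
  simpa using tsum_mul_mul_fm_eq θ hc₀ hc₁ (w := 1) fun n => by simp

lemma tsum_abs_mul_fm_eq :
    ∑' n, ((|n| : ℤ) : ℂ) * c n * fm n θ
      = ∑' k : ℕ, ((k : ℂ) + 1) * c ((k : ℤ) + 1) * fm ((k : ℤ) + 1) θ
        + ∑' k : ℕ, ((k : ℂ) + 1) * c (-((k : ℤ) + 1)) * fm (-((k : ℤ) + 1)) θ := by
  have habs (k : ℕ) : ((|(k : ℤ) + 1| : ℤ) : ℂ) = k + 1 := by
    rw [abs_of_nonneg (by positivity)]; push_cast; rfl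
  rw [tsum_mul_mul_fm_eq θ hc₀ hc₁ (w := fun n => ((|n| : ℤ) : ℂ)) fun n => by simp]
  simp only [abs_zero, Int.cast_zero, zero_mul, zero_add, abs_neg, habs]

lemma tsum_sign_mul_fm_eq :
    ∑' n, (Int.sign n : ℂ) * c n * fm n θ
      = ∑' k : ℕ, c ((k : ℤ) + 1) * fm ((k : ℤ) + 1) θ
        - ∑' k : ℕ, c (-((k : ℤ) + 1)) * fm (-((k : ℤ) + 1)) θ := by
  have hsign (k : ℕ) : Int.sign ((k : ℤ) + 1) = 1 := Int.sign_eq_one_of_pos (by positivity)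
  have hw (n : ℤ) : ‖(Int.sign n : ℂ)‖ ≤ 1 + |(n : ℝ)| := by
    rcases n.sign_trichotomy with h | h | h <;> simp [h, add_nonneg]
  rw [tsum_mul_mul_fm_eq θ hc₀ hc₁ hw]
  simp only [Int.sign_zero, Int.cast_zero, zero_mul, zero_add, Int.sign_neg, hsign, Int.cast_neg,
    Int.cast_one, one_mul, neg_mul, tsum_neg, sub_eq_add_neg]

lemma tsum_intCast_mul_fm_eq :
    ∑' n : ℤ, (n : ℂ) * c n * fm n θ
      = ∑' k : ℕ, ((k : ℂ) + 1) * c ((k : ℤ) + 1) * fm ((k : ℤ) + 1) θ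
        - ∑' k : ℕ, ((k : ℂ) + 1) * c (-((k : ℤ) + 1)) * fm (-((k : ℤ) + 1)) θ := by
  rw [tsum_mul_mul_fm_eq θ hc₀ hc₁ (w := fun n => (n : ℂ)) fun n => by simp]
  simp only [Int.cast_zero, zero_mul, zero_add, Int.cast_neg, Int.cast_add, Int.cast_natCast,
    Int.cast_one, neg_mul, tsum_neg, sub_eq_add_neg]

end FourierSeries

theorem stmt_13 (c : ℤ → ℂ)
    (hreal : ∀ n : ℤ, c (-n) = (starRingEnd ℂ) (c n))
    (hdecay : ∀ k : ℕ, Summable (fun n : ℤ => (|n| : ℝ) ^ k * ‖c n‖)) :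
    ∀ θ : ℝ,
      (∑' n : ℤ, c n * fm n θ) * (∑' n : ℤ, ((|n| : ℤ) : ℂ) * c n * fm n θ)
          - (∑' n : ℤ, (Int.sign n : ℂ) * c n * fm n θ) *
            (∑' n : ℤ, (n : ℂ) * c n * fm n θ)
        = 2 * (c 0 / 2 + ∑' k : ℕ, c ((k : ℤ) + 1) * fm ((k : ℤ) + 1) θ) *
            (∑' k : ℕ, ((k : ℂ) + 1) * (starRingEnd ℂ) (c ((k : ℤ) + 1)) *
              fm (-((k : ℤ) + 1)) θ)
          + 2 * ((starRingEnd ℂ) (c 0) / 2 +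
              ∑' k : ℕ, (starRingEnd ℂ) (c ((k : ℤ) + 1)) * fm (-((k : ℤ) + 1)) θ) *
            (∑' k : ℕ, ((k : ℂ) + 1) * c ((k : ℤ) + 1) * fm ((k : ℤ) + 1) θ) := by
  intro θ
  have hc₀ : Summable fun n : ℤ => ‖c n‖ := by simpa using hdecay 0
  have hc₁ : Summable fun n : ℤ => (|n| : ℝ) * ‖c n‖ := by simpa using hdecay 1
  have hconj₀ : (starRingEnd ℂ) (c 0) = c 0 := by simpa using (hreal 0).symm
  rw [hconj₀]
  simp only [← hreal]
  rw [tsum_fm_eq θ hc₀ hc₁, tsum_abs_mul_fm_eq θ hc₀ hc₁, tsum_sign_mul_fm_eq θ hc₀ hc₁,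
    tsum_intCast_mul_fm_eq θ hc₀ hc₁]
  ring
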